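/- arXiv:2006.08074 — 3 statements merged into one kernel-verified Lean document; each statement's English description precedes it below -/
import Mathlib

section
/- Let R be a ring and a,b,c,d ∈ R satisfy (ac)² = (db)(ac), (db)² = (ac)(db), b(ac)a = b(db)a, and c(ac)d = c(db)d. Then for every natural number i ≥ 1, c(ac)^i d = c(db)^i d. -/
/-!
Put `x = a c` and `y = d b`. From `x y = y²` one gets `x yⁿ = yⁿ⁺¹` for `n ≥ 1`, so peeling one
factor `x = a c` off the left of `c xⁿ⁺¹ d` and using induction gives
`c xⁿ⁺¹ d = c a (c xⁿ d) = c a (c yⁿ d) = c (x yⁿ) d = c yⁿ⁺¹ d`.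
-/

section Monoid

variable {M : Type*} [Monoid M]

theorem mul_pow_succ_eq_pow_add_two_of_mul_eq_sq {x y : M} (h : x * y = y ^ 2) (n : ℕ) :
    x * y ^ (n + 1) = y ^ (n + 2) := by
  rw [pow_succ', ← mul_assoc, h, ← pow_add, add_comm]

theorem mul_pow_succ_mul_eq_of_mul_eq_sq {a c d y : M} (hy : a * c * y = y ^ 2)
    (hbase : c * (a * c) * d = c * y * d) (n : ℕ) :
    c * (a * c) ^ (n + 1) * d = c * y ^ (n + 1) * d := by
  induction n with
  | zero => simpa only [zero_add, pow_one] using hbase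
  | succ n ih =>
    calc c * (a * c) ^ (n + 2) * d
        = c * a * (c * (a * c) ^ (n + 1) * d) := by simp only [pow_succ' _ (n + 1), mul_assoc]
      _ = c * a * (c * y ^ (n + 1) * d) := by rw [ih]
      _ = c * (a * c * y ^ (n + 1)) * d := by simp only [mul_assoc]
      _ = c * y ^ (n + 2) * d := by rw [mul_pow_succ_eq_pow_add_two_of_mul_eq_sq hy]

end Monoid

theorem c_pow_d_general {R : Type*} [Ring R] (a b c d : R)
    (h2 : (d * b) ^ 2 = (a * c) * (d * b))
    (h4 : c * (a * c) * d = c * (d * b) * d) :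
    ∀ i : ℕ, 1 ≤ i → c * (a * c) ^ i * d = c * (d * b) ^ i * d := by
  intro i hi
  obtain ⟨n, rfl⟩ := Nat.exists_eq_add_of_le' hi
  exact mul_pow_succ_mul_eq_of_mul_eq_sq h2.symm h4 n

theorem c_pow_d {R : Type*} [Ring R] (a b c d : R)
    (h1 : (a * c) ^ 2 = (d * b) * (a * c)) (h2 : (d * b) ^ 2 = (a * c) * (d * b))
    (h3 : b * (a * c) * a = b * (d * b) * a) (h4 : c * (a * c) * d = c * (d * b) * d) :
    ∀ i : ℕ, 1 ≤ i → c * (a * c) ^ i * d = c * (d * b) ^ i * d :=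
  c_pow_d_general a b c d h2 h4
end

section
/- Let R be a ring and a,b,c ∈ R satisfy (aba)b = (aca)b, b(aba) = b(aca), (aba)c = (aca)c, and c(aba) = c(aca). Then 1 - ba has a generalized Drazin inverse if and only if 1 - ac has a generalized Drazin inverse. -/
/-!
Work with spectral idempotents: `a` has a generalized Drazin inverse iff there is an idempotent
`p` in the double commutant of `a` with `a + p` a unit and `a * p` quasinilpotent (then
`x = (a + p)⁻¹ (1 - p)`); on `p R` the element `1 - a` is invertible, with inverse `k`.

With `s = b a` and `t = c a` the hypotheses read `s² = s t` and `t s = t²`, so `d = s - t` satisfies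
`(1 - s) d = d`, `d² = 0` and `1 - t = (1 - s) + d`. Such a perturbation keeps a spectral
idempotent: conjugating by the unit `1 + d k` replaces `d` by `d (1 - p)`, which lives in the corner
where `1 - s` is invertible, and there `p` is still spectral. Finally Jacobson's lemma passes from
`1 - c a` to `1 - a c`: if `p` is spectral for `1 - a b` and `k` inverts `a b` on `p R`, then `b k a`
is spectral for `1 - b a`.
-/

/-- An element is quasinilpotent if `1 + a*x` is a unit for every `x` commuting with `a`. -/
def Quasinilpotent {R : Type*} [Ring R] (a : R) : Prop :=
  ∀ x : R, x * a = a * x → IsUnit (1 + a * x)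

/-- `x` is a generalized Drazin inverse of `a`. -/
def IsGDrazin {R : Type*} [Ring R] (a x : R) : Prop :=
  x = x * a * x ∧ (∀ y : R, y * a = a * y → x * y = y * x) ∧
    Quasinilpotent (a - a ^ 2 * x)

section GeneralizedDrazin

variable {R : Type*} [Ring R]

theorem isUnit_one_sub_mul_comm (a b : R) : IsUnit (1 - a * b) ↔ IsUnit (1 - b * a) := by
  have := spectrum.unit_mem_mul_comm (R := ℤ) (a := a) (b := b) (r := 1)
  simpa [spectrum.mem_iff] using not_iff_not.mpr this

namespace Quasinilpotent

theorem isUnit_one_add {n : R} (hn : Quasinilpotent n) : IsUnit (1 + n) := by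
  simpa using hn 1 (by simp)

theorem isUnit_one_sub {n : R} (hn : Quasinilpotent n) : IsUnit (1 - n) := by
  simpa [sub_eq_add_neg] using hn (-1) (by simp)

theorem map {S : Type*} [Ring S] (f : R ≃+* S) {n : R} (hn : Quasinilpotent n) :
    Quasinilpotent (f n) := by
  intro x hx
  have hx' : f.symm x * n = n * f.symm x := f.injective (by simpa using hx)
  simpa using (hn _ hx').map f

/-- `1 + b a t` and `1 - b a t` commute and multiply to `1 - (b a t)² = 1 - b (a t² b a)`, which is
a unit by Jacobson's lemma since `a t² b` commutes with `a b`. -/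
theorem mul_comm {a b : R} (hab : Quasinilpotent (a * b)) : Quasinilpotent (b * a) := by
  intro t ht
  have ht : Commute t (b * a) := ht
  have htt : Commute (t * t) (b * a) := ht.mul_left ht
  have hX : Commute (a * (t * t) * b) (a * b) := by
    calc a * (t * t) * b * (a * b) = a * ((t * t) * (b * a)) * b := by noncomm_ring
      _ = a * ((b * a) * (t * t)) * b := by rw [htt.eq]
      _ = a * b * (a * (t * t) * b) := by noncomm_ring
  have hsq : IsUnit (1 - b * a * t * (b * a * t)) := by
    have h := hab (-(a * (t * t) * b)) (by rw [neg_mul, mul_neg, hX.eq])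
    rw [mul_neg, ← sub_eq_add_neg, ← hX.eq] at h
    have h' := (isUnit_one_sub_mul_comm (a * (t * t) * b * a) b).mp
      (by simpa only [mul_assoc] using h)
    convert h' using 2
    calc b * a * t * (b * a * t) = b * a * t * (t * (b * a)) := by rw [ht.eq]
      _ = b * (a * (t * t) * b * a) := by noncomm_ring
  have hcomm : Commute (1 + b * a * t) (1 - b * a * t) := by
    unfold Commute SemiconjBy; noncomm_ring
  refine (hcomm.isUnit_mul_iff.mp ?_).1
  convert hsq using 1
  noncomm_ring

end Quasinilpotent

/-- The spectral idempotent `a^π` of Koliha and Patrício. -/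
structure IsSpectralIdempotent (a p : R) : Prop where
  isIdempotentElem : IsIdempotentElem p
  commute_of_commute : ∀ t : R, Commute t a → Commute t p
  isUnit_add : IsUnit (a + p)
  quasinilpotent_mul : Quasinilpotent (a * p)

namespace IsSpectralIdempotent

variable {a p : R}

theorem commute (hp : IsSpectralIdempotent a p) : Commute a p :=
  hp.commute_of_commute a (Commute.refl a)

theorem map (hp : IsSpectralIdempotent a p) {S : Type*} [Ring S] (f : R ≃+* S) :
    IsSpectralIdempotent (f a) (f p) where
  isIdempotentElem := hp.isIdempotentElem.map f
  commute_of_commute t ht := by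
    simpa using (hp.commute_of_commute (f.symm t) (by simpa using ht.map f.symm)).map f
  isUnit_add := by simpa using hp.isUnit_add.map f
  quasinilpotent_mul := by simpa using hp.quasinilpotent_mul.map f

theorem conj (hp : IsSpectralIdempotent a p) (u : Rˣ) :
    IsSpectralIdempotent (u * a * ↑u⁻¹) (u * p * ↑u⁻¹) := by
  simpa [ConjAct.units_smul_def] using
    hp.map (MulSemiringAction.toRingEquiv _ R (ConjAct.toConjAct u))

theorem isGDrazin (hp : IsSpectralIdempotent a p) :
    IsGDrazin a (↑hp.isUnit_add.unit⁻¹ * (1 - p)) := by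
  set v := hp.isUnit_add.unit
  have hv : (v : R) = a + p := hp.isUnit_add.unit_spec
  have hcomm : ∀ t, Commute t a → Commute t (↑v⁻¹ * (1 - p)) := fun t ht =>
    have htp := hp.commute_of_commute t ht
    (hv ▸ ht.add_right htp).units_inv_right.mul_right ((Commute.one_right t).sub_right htp)
  have hax : a * (↑v⁻¹ * (1 - p)) = 1 - p := by
    have hav : Commute a ↑v⁻¹ := (hv ▸ (Commute.refl a).add_right hp.commute).units_inv_right
    calc a * (↑v⁻¹ * (1 - p)) = ↑v⁻¹ * ((a + p) * (1 - p)) := by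
          rw [← mul_assoc, hav.eq, mul_assoc, add_mul, hp.isIdempotentElem.mul_one_sub_self,
            add_zero]
      _ = 1 - p := by rw [← hv, ← mul_assoc, Units.inv_mul, one_mul]
  refine ⟨?_, fun y hy => (hcomm y hy).eq.symm, ?_⟩
  · calc ↑v⁻¹ * (1 - p) = ↑v⁻¹ * ((1 - p) * (1 - p)) := by
          rw [hp.isIdempotentElem.one_sub.eq]
      _ = (1 - p) * (↑v⁻¹ * (1 - p)) := by
          rw [← mul_assoc, ← (hcomm (1 - p) ((Commute.one_left a).sub_left hp.commute.symm)).eq]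
      _ = _ := by rw [← (hcomm a (Commute.refl a)).eq, hax]
  · rw [sq, mul_assoc, hax, mul_sub, mul_one, sub_sub_cancel]
    exact hp.quasinilpotent_mul

end IsSpectralIdempotent

theorem IsGDrazin.isSpectralIdempotent {a x : R} (hx : IsGDrazin a x) :
    IsSpectralIdempotent a (1 - a * x) := by
  obtain ⟨hxax, hcomm, hqn⟩ := hx
  have hax : Commute a x := (hcomm a rfl).symm
  have hap : a * (1 - a * x) = a - a ^ 2 * x := by rw [mul_sub, mul_one, sq, mul_assoc]
  have hidem : IsIdempotentElem (a * x) := by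
    rw [IsIdempotentElem, mul_assoc, ← mul_assoc x, ← hxax]
  have hcomm' : ∀ t, Commute t a → Commute t (1 - a * x) := fun t ht =>
    (Commute.one_right t).sub_right (ht.mul_right (hcomm t ht).symm)
  refine ⟨hidem.one_sub, hcomm', ?_, hap ▸ hqn⟩
  have hprod : (a + (1 - a * x)) * (x + (1 - a * x)) = 1 + a * (1 - a * x) := by
    have hxx : a * x * x = x := by rw [hax.eq, ← hxax]
    calc _ = 1 + a * (1 - a * x) + (x - a * x * x) + (a * x * (a * x) - a * x) := by noncomm_ring
      _ = _ := by rw [hxx, hidem.eq, sub_self, sub_self, add_zero, add_zero]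
  have hunit : Commute (a + (1 - a * x)) (x + (1 - a * x)) :=
    (hax.add_right (hcomm' a (Commute.refl a))).add_left
      ((hcomm' x (hcomm a rfl)).symm.add_right (Commute.refl _))
  exact (hunit.isUnit_mul_iff.mp (hprod ▸ (hap ▸ hqn).isUnit_one_add)).1

theorem exists_isGDrazin_iff_exists_isSpectralIdempotent {a : R} :
    (∃ x, IsGDrazin a x) ↔ ∃ p, IsSpectralIdempotent a p :=
  ⟨fun ⟨_, hx⟩ => ⟨_, hx.isSpectralIdempotent⟩, fun ⟨_, hp⟩ => ⟨_, hp.isGDrazin⟩⟩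

namespace IsSpectralIdempotent

variable {a p d : R}

theorem exists_inv_one_sub (hp : IsSpectralIdempotent a p) :
    ∃ k : R, (1 - a) * k = p ∧ k * (1 - a) = p ∧ k * p = k ∧
      ∀ t, Commute t a → Commute t k := by
  obtain ⟨u, hu⟩ := hp.quasinilpotent_mul.isUnit_one_sub
  have hcomm : ∀ t, Commute t a → Commute t ↑u⁻¹ := fun t ht =>
    Commute.units_inv_right (hu ▸ (Commute.one_right t).sub_right
      (ht.mul_right (hp.commute_of_commute t ht)))
  have hap : (1 - a) * p = u * p := by
    rw [hu, sub_mul, sub_mul, one_mul, mul_assoc, hp.isIdempotentElem.eq]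
  have hua : (1 - a) * ↑u⁻¹ = ↑u⁻¹ * (1 - a) :=
    (hcomm (1 - a) ((Commute.one_left a).sub_left (Commute.refl a))).eq
  refine ⟨↑u⁻¹ * p, ?_, ?_, ?_, fun t ht => (hcomm t ht).mul_right (hp.commute_of_commute t ht)⟩
  · rw [← mul_assoc, hua, mul_assoc, hap, ← mul_assoc, Units.inv_mul, one_mul]
  · rw [mul_assoc, ((Commute.one_right p).sub_right hp.commute.symm).eq, hap, ← mul_assoc,
      Units.inv_mul, one_mul]
  · rw [mul_assoc, hp.isIdempotentElem.eq]

theorem mul_eq_zero_of_mul_eq_self (hp : IsSpectralIdempotent a p) (hd : a * d = d) :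
    p * d = 0 := by
  obtain ⟨k, -, hk, -, -⟩ := hp.exists_inv_one_sub
  rw [← hk, mul_assoc, sub_mul, one_mul, hd, sub_self, mul_zero]

theorem mul_mul_one_sub_eq_zero (hp : IsSpectralIdempotent a p) (hd : a * d = d)
    (hdd : d * d = 0) {t : R} (ht : Commute t (a + d)) : p * t * (1 - p) = 0 := by
  have hpa : p * (a + d) = a * p := by
    rw [mul_add, hp.mul_eq_zero_of_mul_eq_self hd, add_zero, hp.commute.eq]
  have hptd : p * t * d = 0 := by
    have h : a * (p * t * d) = p * t * d := by
      calc a * (p * t * d) = p * (a + d) * t * d := by rw [hpa]; noncomm_ring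
        _ = p * t * ((a + d) * d) := by rw [mul_assoc p, ← ht.eq]; noncomm_ring
        _ = p * t * d := by rw [add_mul, hd, hdd, add_zero]
    rw [← hp.mul_eq_zero_of_mul_eq_self h, ← mul_assoc, ← mul_assoc, hp.isIdempotentElem.eq]
  have hz : Commute (p * t * (1 - p)) a := by
    calc p * t * (1 - p) * a = p * (t * (a + d)) * (1 - p) - p * t * d * (1 - p) := by
          rw [mul_assoc _ (1 - p), ((Commute.one_left a).sub_left hp.commute.symm).eq]
          noncomm_ring
      _ = a * (p * t * (1 - p)) := by rw [ht.eq, hptd, ← mul_assoc p, hpa]; noncomm_ring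
  calc p * t * (1 - p) = p * (p * t * (1 - p)) := by
        rw [← mul_assoc, ← mul_assoc, hp.isIdempotentElem.eq]
    _ = p * t * (1 - p) * p := (hp.commute_of_commute _ hz).eq.symm
    _ = 0 := by rw [mul_assoc, hp.isIdempotentElem.one_sub_mul_self, mul_zero]

theorem one_sub_mul_mul_eq_zero (hp : IsSpectralIdempotent a p) (hd : a * d = d)
    (hdp : d * p = 0) (hdd : d * d = 0) {t : R} (ht : Commute t (a + d)) :
    (1 - p) * t * p = 0 := by
  obtain ⟨k, -, hk, hkp, -⟩ := hp.exists_inv_one_sub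
  have hpd := hp.mul_eq_zero_of_mul_eq_self hd
  have hpad : Commute (1 - p) (a + d) := by
    refine (Commute.one_left _).sub_left ?_
    rw [Commute, SemiconjBy, mul_add, add_mul, hpd, hdp, hp.commute.eq]
  have haT : a * ((1 - p) * t * p) = (1 - p) * t * p * a - d * ((1 - p) * t * p) := by
    have h : (a + d) * ((1 - p) * t * p) = (1 - p) * t * p * a := by
      calc (a + d) * ((1 - p) * t * p) = (a + d) * (1 - p) * t * p := by noncomm_ring
        _ = (1 - p) * (t * (a + d)) * p := by rw [← hpad.eq, ht.eq]; noncomm_ring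
        _ = (1 - p) * t * (a * p + d * p) := by noncomm_ring
        _ = (1 - p) * t * p * a := by rw [hdp, add_zero, hp.commute.eq]; noncomm_ring
    rw [← h]; noncomm_ring
  set T := (1 - p) * t * p
  have hTp : T * p = T := by rw [mul_assoc, hp.isIdempotentElem.eq]
  have hpT : p * T = 0 := by
    rw [← mul_assoc, ← mul_assoc, hp.isIdempotentElem.mul_one_sub_self, zero_mul, zero_mul]
  have hka : k * a = k - p := by rw [← hk]; noncomm_ring
  -- `T` need not commute with `a`, but `T + d T k` does, so the double commutant property applies.
  have hZ : Commute (T + d * T * k) a := by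
    calc (T + d * T * k) * a = T * a + d * T * (k * a) := by noncomm_ring
      _ = T * a - d * (T * p) + d * T * k := by rw [hka]; noncomm_ring
      _ = a * T + a * d * T * k := by rw [hTp, haT, hd]
      _ = a * (T + d * T * k) := by noncomm_ring
  have hZ0 : T + d * T * k = 0 := by
    calc T + d * T * k = (T + d * T * k) * p := by rw [add_mul, hTp, mul_assoc (d * T), hkp]
      _ = p * (T + d * T * k) := (hp.commute_of_commute _ hZ).eq
      _ = 0 := by rw [mul_add, hpT, ← mul_assoc, ← mul_assoc, hpd, zero_mul, zero_mul, add_zero]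
  have hT : T = -(d * T * k) := eq_neg_of_add_eq_zero_left hZ0
  have hdT : d * T = 0 := by
    rw [hT, mul_neg, ← mul_assoc, ← mul_assoc, hdd, zero_mul, zero_mul, neg_zero]
  rw [hT, hdT, zero_mul, neg_zero]

theorem add_of_mul_eq_self (hp : IsSpectralIdempotent a p) (hd : a * d = d) (hdp : d * p = 0)
    (hdd : d * d = 0) : IsSpectralIdempotent (a + d) p where
  isIdempotentElem := hp.isIdempotentElem
  commute_of_commute t ht := by
    rw [Commute, SemiconjBy, ← sub_eq_zero]
    calc t * p - p * t = (1 - p) * t * p - p * t * (1 - p) := by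
          rw [← hp.isIdempotentElem.eq]; noncomm_ring
      _ = 0 := by
        rw [hp.one_sub_mul_mul_eq_zero hd hdp hdd ht, hp.mul_mul_one_sub_eq_zero hd hdd ht,
          sub_zero]
  isUnit_add := by
    have h : a + d + p = (a + p) * (1 + d) := by
      rw [mul_add, mul_one, add_mul, hd, hp.mul_eq_zero_of_mul_eq_self hd, add_zero]; abel
    rw [h]
    exact hp.isUnit_add.mul (IsNilpotent.isUnit_one_add ⟨2, by rw [sq, hdd]⟩)
  quasinilpotent_mul := by rw [add_mul, hdp, add_zero]; exact hp.quasinilpotent_mul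

theorem exists_add_of_mul_eq_self (hp : IsSpectralIdempotent a p) (hd : a * d = d)
    (hdd : d * d = 0) : ∃ q, IsSpectralIdempotent (a + d) q := by
  obtain ⟨k, -, hk, hkp, -⟩ := hp.exists_inv_one_sub
  have hpd := hp.mul_eq_zero_of_mul_eq_self hd
  have hkd : k * d = 0 := by rw [← hkp, mul_assoc, hpd, mul_zero]
  have hdk : d * k * (d * k) = 0 := by rw [mul_assoc, ← mul_assoc k, hkd, zero_mul, mul_zero]
  let w : Rˣ :=
    ⟨1 + d * k, 1 - d * k,
      by rw [show (1 + d * k) * (1 - d * k) = 1 - d * k * (d * k) by noncomm_ring, hdk, sub_zero],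
      by rw [show (1 - d * k) * (1 + d * k) = 1 - d * k * (d * k) by noncomm_ring, hdk, sub_zero]⟩
  have hw : (a + d * (1 - p)) * ↑w = ↑w * (a + d) := by
    calc (a + d * (1 - p)) * (1 + d * k)
        = a + d + a * d * k - d * p + d * d * k - d * (p * d) * k := by noncomm_ring
      _ = a + d + d * (k - k * (1 - a)) + d * (k * d) := by
          rw [hd, hdd, hpd, hkd, hk]; noncomm_ring
      _ = (1 + d * k) * (a + d) := by noncomm_ring
  have hblock := hp.add_of_mul_eq_self (d := d * (1 - p)) (by rw [← mul_assoc, hd])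
    (by rw [mul_assoc, hp.isIdempotentElem.one_sub_mul_self, mul_zero])
    (by rw [mul_assoc, ← mul_assoc (1 - p), sub_mul, one_mul, hpd, sub_zero, ← mul_assoc, hdd,
      zero_mul])
  have hconj := hblock.conj w⁻¹
  rw [inv_inv, mul_assoc, hw, ← mul_assoc, Units.inv_mul, one_mul] at hconj
  exact ⟨_, hconj⟩

theorem one_sub_mul_comm {a b p : R} (hp : IsSpectralIdempotent (1 - a * b) p) :
    ∃ q, IsSpectralIdempotent (1 - b * a) q := by
  obtain ⟨k, hk1, hk2, hkp, hkc⟩ := hp.exists_inv_one_sub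
  rw [sub_sub_cancel] at hk1 hk2
  have hpk : p * k = k := by rw [(hkc p hp.commute.symm).eq, hkp]
  refine ⟨b * k * a, ?_, fun t ht => ?_, ?_, ?_⟩
  · calc b * k * a * (b * k * a) = b * (k * (a * b * k)) * a := by noncomm_ring
      _ = b * k * a := by rw [hk1, hkp]
  · have hba : Commute t (b * a) := by
      simpa only [sub_sub_cancel] using (Commute.one_right t).sub_right ht
    have hrk : Commute (a * t * b) k := by
      refine hkc _ ((Commute.one_right _).sub_right ?_)
      calc a * t * b * (a * b) = a * (t * (b * a)) * b := by noncomm_ring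
        _ = a * b * (a * t * b) := by rw [hba.eq]; noncomm_ring
    have hpat : p * (a * t) = a * t * b * (k * a) := by
      calc p * (a * t) = k * (a * ((b * a) * t)) := by rw [← hk2]; noncomm_ring
        _ = k * (a * t * b) * a := by rw [← hba.eq]; noncomm_ring
        _ = a * t * b * (k * a) := by rw [← hrk.eq]; noncomm_ring
    have htbp : t * b * p = b * k * (a * t * b) := by
      calc t * b * p = t * (b * a) * b * k := by rw [← hk1]; noncomm_ring
        _ = b * (a * t * b * k) := by rw [hba.eq]; noncomm_ring
        _ = b * k * (a * t * b) := by rw [hrk.eq]; noncomm_ring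
    calc t * (b * k * a) = t * b * p * k * a := by rw [mul_assoc (t * b), hpk]; noncomm_ring
      _ = b * k * (a * t * b * (k * a)) := by rw [htbp]; noncomm_ring
      _ = b * (k * p) * a * t := by rw [← hpat]; noncomm_ring
      _ = b * k * a * t := by rw [hkp]
  · rw [show 1 - b * a + b * k * a = 1 - b * ((1 - k) * a) by noncomm_ring,
      ← isUnit_one_sub_mul_comm,
      show 1 - (1 - k) * a * b = 1 - a * b + k * (a * b) by noncomm_ring, hk2]
    exact hp.isUnit_add
  · rw [show (1 - b * a) * (b * k * a) = b * ((1 - a * b) * k * a) by noncomm_ring]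
    refine Quasinilpotent.mul_comm ?_
    rw [show (1 - a * b) * k * a * b = (1 - a * b) * (k * (a * b)) by noncomm_ring, hk2]
    exact hp.quasinilpotent_mul

end IsSpectralIdempotent

theorem exists_isGDrazin_one_sub_mul_comm (a b : R) :
    (∃ x, IsGDrazin (1 - a * b) x) ↔ ∃ y, IsGDrazin (1 - b * a) y := by
  simp only [exists_isGDrazin_iff_exists_isSpectralIdempotent]
  exact ⟨fun ⟨_, hp⟩ => hp.one_sub_mul_comm, fun ⟨_, hp⟩ => hp.one_sub_mul_comm⟩

theorem exists_isGDrazin_add_of_mul_eq_self {a d : R} (hd : a * d = d) (hdd : d * d = 0) :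
    (∃ x, IsGDrazin a x) → ∃ y, IsGDrazin (a + d) y := by
  simp only [exists_isGDrazin_iff_exists_isSpectralIdempotent]
  exact fun ⟨_, hp⟩ => hp.exists_add_of_mul_eq_self hd hdd

theorem exists_isGDrazin_one_sub_of_mul_eq_mul {s t : R} (hs : s * s = s * t)
    (ht : t * s = t * t) : (∃ x, IsGDrazin (1 - s) x) → ∃ y, IsGDrazin (1 - t) y := by
  have hd : (1 - s) * (s - t) = s - t := by
    rw [mul_sub, sub_mul, sub_mul, one_mul, one_mul, hs, sub_sub_sub_cancel_right]
  have hdd : (s - t) * (s - t) = 0 := by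
    rw [mul_sub, sub_mul, sub_mul, hs, ht]; abel
  simpa using exists_isGDrazin_add_of_mul_eq_self hd hdd

end GeneralizedDrazin

theorem gdrazin_three_elements_general {R : Type*} [Ring R] (a b c : R)
    (h2 : b * (a * b * a) = b * (a * c * a))
    (h4 : c * (a * b * a) = c * (a * c * a)) :
    (∃ x : R, IsGDrazin (1 - b * a) x) ↔ (∃ y : R, IsGDrazin (1 - a * c) y) := by
  have hs : b * a * (b * a) = b * a * (c * a) := by simpa only [mul_assoc] using h2
  have ht : c * a * (b * a) = c * a * (c * a) := by simpa only [mul_assoc] using h4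
  rw [← exists_isGDrazin_one_sub_mul_comm c a]
  exact ⟨exists_isGDrazin_one_sub_of_mul_eq_mul hs ht,
    exists_isGDrazin_one_sub_of_mul_eq_mul ht.symm hs.symm⟩

theorem gdrazin_three_elements {R : Type*} [Ring R] (a b c : R)
    (h1 : (a * b * a) * b = (a * c * a) * b) (h2 : b * (a * b * a) = b * (a * c * a))
    (h3 : (a * b * a) * c = (a * c * a) * c) (h4 : c * (a * b * a) = c * (a * c * a)) :
    (∃ x : R, IsGDrazin (1 - b * a) x) ↔ (∃ y : R, IsGDrazin (1 - a * c) y) :=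
  gdrazin_three_elements_general a b c h2 h4
end

section
/- Let R be a ring and a,b,c,d ∈ R satisfy (ac)² = (db)(ac), (db)² = (ac)(db), b(ac)a = b(db)a, and c(ac)d = c(db)d. Then 1 - bd is Drazin invertible if and only if 1 - ac is Drazin invertible, and in that case the Drazin index satisfies i(1-ac) ≤ i(1-bd) + 1. -/
/-!
An element `α` has a Drazin inverse of index `k` exactly when `α ^ k ∈ α ^ (k + 1) R ∩ R α ^ (k + 1)`,
so it suffices to transfer these two one-sided divisibilities.

Jacobson's identities `d (1 - b d) = (1 - d b) d` and `(1 - b d) b = b (1 - d b)` transfer them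
from `1 - b d` to `1 - d b` at the same index.

If `p² = q p` and `q² = p q`, put `r = p - q`. Then `r (1 - p) = r (1 - q) = r` and `r p = 0`, so
`(1 - q) ^ n ∈ (1 - p) ^ n + R r` and `r (1 - p) ^ n = r`. This transfers left divisibility from
`1 - q` to `1 - p` at the same index. For right divisibility, `(1 - p) ^ (k + 1) = (1 - p) ^ (k + 2)
+ (1 - q) ^ (k + 1) p`, and if `(1 - q) ^ k = (1 - q) ^ (k + 1) y` then `r y = r`, so the error term
`R r y p = R r p` vanishes; this costs one more power. Apply this to `(p, q) = (a c, d b)` and to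
`(p, q) = (d b, a c)`.
-/

/-- `x` is a Drazin inverse of `a` with (an) index `k`. -/
def IsDrazinWithIndex {R : Type*} [Ring R] (a x : R) (k : ℕ) : Prop :=
  x = x * a * x ∧ x * a = a * x ∧ a ^ k = a ^ (k + 1) * x

/-- The Drazin index: the least `k` admitting a Drazin inverse with index `k`. -/
noncomputable def drazinIndex {R : Type*} [Ring R] (a : R) : ℕ :=
  sInf {k : ℕ | ∃ x : R, IsDrazinWithIndex a x k}

section

variable {R : Type*} [Ring R]

lemma pow_add_mul_pow_eq_pow {a u : R} {m : ℕ} (hu : a ^ m = a ^ (m + 1) * u) (j : ℕ) :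
    a ^ (m + j) * u ^ j = a ^ m := by
  induction j with
  | zero => simp
  | succ j ih =>
    calc a ^ (m + (j + 1)) * u ^ (j + 1) = a ^ j * (a ^ (m + 1) * u) * u ^ j := by
          rw [pow_succ' u, show m + (j + 1) = j + (m + 1) by omega, pow_add]; noncomm_ring
      _ = a ^ (m + j) * u ^ j := by rw [← hu, mul_assoc, ← mul_assoc (a ^ j), ← pow_add, add_comm j]
      _ = a ^ m := ih

lemma pow_mul_eq_mul_pow_of_pow_eq {a u v : R} {m : ℕ} (hu : a ^ m = a ^ (m + 1) * u)
    (hv : a ^ m = v * a ^ (m + 1)) : a ^ m * u = v * a ^ m := by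
  conv_lhs => rw [hv]
  rw [mul_assoc, ← hu]

lemma pow_mul_pow_eq_pow_mul_pow_of_pow_eq {a u v : R} {m : ℕ} (hu : a ^ m = a ^ (m + 1) * u)
    (hv : a ^ m = v * a ^ (m + 1)) (j : ℕ) : a ^ m * u ^ j = v ^ j * a ^ m := by
  induction j with
  | zero => simp
  | succ j ih =>
    rw [pow_succ, ← mul_assoc, ih, mul_assoc, pow_mul_eq_mul_pow_of_pow_eq hu hv, ← mul_assoc,
      ← pow_succ]

/-- The Drazin inverse is `a ^ m u ^ (m + 1) = v ^ (m + 1) a ^ m`. -/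
lemma exists_isDrazinWithIndex_of_pow_eq {a u v : R} {m : ℕ} (hu : a ^ m = a ^ (m + 1) * u)
    (hv : a ^ m = v * a ^ (m + 1)) : ∃ z, IsDrazinWithIndex a z m := by
  have hG := pow_mul_pow_eq_pow_mul_pow_of_pow_eq hu hv
  have haz : a * (a ^ m * u ^ (m + 1)) = a ^ m * u ^ m := by
    rw [← mul_assoc, ← pow_succ', pow_succ' u, ← mul_assoc, ← hu]
  have hza : a ^ m * u ^ (m + 1) * a = a ^ m * u ^ m := by
    rw [hG, hG, mul_assoc, ← pow_succ, pow_succ, mul_assoc, ← hv]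
  refine ⟨a ^ m * u ^ (m + 1), ?_, by rw [hza, haz], ?_⟩
  · calc a ^ m * u ^ (m + 1) = v ^ m * (a ^ m * u) := by
          rw [hG, pow_succ, mul_assoc, pow_mul_eq_mul_pow_of_pow_eq hu hv]
      _ = v ^ m * (a ^ (m + m) * u ^ m) * u := by
          rw [pow_add_mul_pow_eq_pow hu, mul_assoc]
      _ = v ^ m * a ^ m * (a ^ m * u ^ (m + 1)) := by rw [pow_add, pow_succ]; noncomm_ring
      _ = a ^ m * u ^ (m + 1) * a * (a ^ m * u ^ (m + 1)) := by rw [hza, hG m]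
  · refine Eq.symm ?_
    rw [← mul_assoc, ← pow_add, show m + 1 + m = m + (m + 1) by omega, pow_add_mul_pow_eq_pow hu]

lemma exists_isDrazinWithIndex_iff {a : R} {k : ℕ} :
    (∃ x, IsDrazinWithIndex a x k) ↔
      (∃ u, a ^ k = a ^ (k + 1) * u) ∧ ∃ v, a ^ k = v * a ^ (k + 1) := by
  refine ⟨fun ⟨x, _, hxa, hk⟩ => ⟨⟨x, hk⟩, x, ?_⟩, fun ⟨⟨u, hu⟩, v, hv⟩ =>
    exists_isDrazinWithIndex_of_pow_eq hu hv⟩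
  rw [hk, (Commute.pow_right hxa (k + 1)).eq]

lemma one_sub_mul_pow_mul_right {b d u : R} {k : ℕ}
    (h : (1 - b * d) ^ k = (1 - b * d) ^ (k + 1) * u) :
    (1 - d * b) ^ k = (1 - d * b) ^ (k + 1) * (1 + d * u * b) := by
  have hd : SemiconjBy d ((1 - b * d) ^ (k + 1)) ((1 - d * b) ^ (k + 1)) :=
    SemiconjBy.pow_right (by simp only [SemiconjBy]; noncomm_ring) _
  have hb : (1 - b * d) ^ k * b = b * (1 - d * b) ^ k :=
    (SemiconjBy.pow_right (by simp only [SemiconjBy]; noncomm_ring) k : SemiconjBy b _ _).eq.symm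
  calc (1 - d * b) ^ k = (1 - d * b) ^ (k + 1) + d * ((1 - b * d) ^ k * b) := by
        rw [hb, pow_succ']; noncomm_ring
    _ = (1 - d * b) ^ (k + 1) * (1 + d * u * b) := by
        rw [h, ← mul_assoc, ← mul_assoc, hd.eq]; noncomm_ring

lemma one_sub_mul_pow_mul_left {b d v : R} {k : ℕ}
    (h : (1 - b * d) ^ k = v * (1 - b * d) ^ (k + 1)) :
    (1 - d * b) ^ k = (1 + d * v * b) * (1 - d * b) ^ (k + 1) := by
  have hd : SemiconjBy d ((1 - b * d) ^ k) ((1 - d * b) ^ k) :=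
    SemiconjBy.pow_right (by simp only [SemiconjBy]; noncomm_ring) _
  have hb : (1 - b * d) ^ (k + 1) * b = b * (1 - d * b) ^ (k + 1) :=
    (SemiconjBy.pow_right (by simp only [SemiconjBy]; noncomm_ring) _ : SemiconjBy b _ _).eq.symm
  calc (1 - d * b) ^ k = (1 - d * b) ^ (k + 1) + d * (1 - b * d) ^ k * b := by
        rw [hd.eq, pow_succ]; noncomm_ring
    _ = (1 + d * v * b) * (1 - d * b) ^ (k + 1) := by
        rw [h, mul_assoc, mul_assoc, hb]; noncomm_ring

lemma exists_isDrazinWithIndex_one_sub_mul_comm {b d : R} {k : ℕ}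
    (h : ∃ x, IsDrazinWithIndex (1 - b * d) x k) : ∃ x, IsDrazinWithIndex (1 - d * b) x k := by
  obtain ⟨⟨u, hu⟩, v, hv⟩ := exists_isDrazinWithIndex_iff.mp h
  exact exists_isDrazinWithIndex_iff.mpr
    ⟨⟨_, one_sub_mul_pow_mul_right hu⟩, _, one_sub_mul_pow_mul_left hv⟩

lemma mul_pow_eq_self_of_mul_eq_self {a b : R} (h : a * b = a) (n : ℕ) : a * b ^ n = a := by
  induction n with
  | zero => simp
  | succ n ih => rw [pow_succ, ← mul_assoc, ih, h]

section

variable {p q : R}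

lemma exists_one_sub_pow_eq_one_sub_pow_add_mul (h : (p - q) * (1 - p) = p - q) (n : ℕ) :
    ∃ f, (1 - q) ^ n = (1 - p) ^ n + f * (p - q) := by
  induction n with
  | zero => exact ⟨0, by simp⟩
  | succ n ih =>
    obtain ⟨f, hf⟩ := ih
    refine ⟨1 + (1 - q) * f, ?_⟩
    calc (1 - q) ^ (n + 1) = (1 - p + (p - q)) * ((1 - p) ^ n + f * (p - q)) := by
          rw [← hf, pow_succ']; abel_nf
      _ = (1 - p) ^ (n + 1) + (1 + (1 - q) * f) * (p - q) := by
          rw [add_mul, mul_add, mul_add, ← mul_assoc, mul_pow_eq_self_of_mul_eq_self h, ← pow_succ']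
          noncomm_ring

lemma exists_one_sub_pow_eq_mul_one_sub_pow_succ_of_sq_eq (hp : p ^ 2 = q * p) {y : R} {k : ℕ}
    (h : (1 - q) ^ k = y * (1 - q) ^ (k + 1)) : ∃ w, (1 - p) ^ k = w * (1 - p) ^ (k + 1) := by
  have hr : (p - q) * (1 - p) = p - q := by rw [mul_one_sub, sub_mul, ← sq, hp, sub_self, sub_zero]
  obtain ⟨f, hf⟩ := exists_one_sub_pow_eq_one_sub_pow_add_mul hr k
  obtain ⟨g, hg⟩ := exists_one_sub_pow_eq_one_sub_pow_add_mul hr (k + 1)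
  refine ⟨y + (y * g - f) * (p - q), ?_⟩
  calc (1 - p) ^ k = y * (1 - p) ^ (k + 1) + (y * g - f) * (p - q) := by
        rw [eq_sub_of_add_eq hf.symm, h, hg]; noncomm_ring
    _ = (y + (y * g - f) * (p - q)) * (1 - p) ^ (k + 1) := by
        rw [add_mul, mul_assoc _ (p - q), mul_pow_eq_self_of_mul_eq_self hr]

lemma one_sub_pow_succ_eq_one_sub_pow_succ_succ_mul_of_sq_eq (hp : p ^ 2 = q * p)
    (hq : q ^ 2 = p * q) {y : R} {k : ℕ} (h : (1 - q) ^ k = (1 - q) ^ (k + 1) * y) :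
    (1 - p) ^ (k + 1) = (1 - p) ^ (k + 2) * (1 + y * p) := by
  have hrp : (p - q) * p = 0 := by rw [sub_mul, ← sq, hp, sub_self]
  have hr_p : (p - q) * (1 - p) = p - q := by rw [mul_one_sub, hrp, sub_zero]
  have hr_q : (p - q) * (1 - q) = p - q := by
    rw [mul_one_sub, sub_mul, ← sq, hq, sub_self, sub_zero]
  have hry : (p - q) * y = p - q := by
    calc (p - q) * y = (p - q) * (1 - q) ^ (k + 1) * y := by
          rw [mul_pow_eq_self_of_mul_eq_self hr_q]
      _ = p - q := by rw [mul_assoc, ← h, mul_pow_eq_self_of_mul_eq_self hr_q]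
  obtain ⟨f, hf⟩ := exists_one_sub_pow_eq_one_sub_pow_add_mul hr_p (k + 2)
  obtain ⟨g, hg⟩ := exists_one_sub_pow_eq_one_sub_pow_add_mul hr_p (k + 1)
  have hq_pow : (1 - q) ^ (k + 1) = (1 - q) ^ (k + 2) * y := by
    rw [pow_succ' _ (k + 1), mul_assoc, ← h, pow_succ']
  have hp_pow_mul : (1 - p) ^ (k + 1) * p = (1 - p) ^ (k + 2) * y * p := by
    calc (1 - p) ^ (k + 1) * p = (1 - q) ^ (k + 1) * p := by
          rw [hg, add_mul, mul_assoc, hrp, mul_zero, add_zero]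
      _ = ((1 - p) ^ (k + 2) + f * (p - q)) * y * p := by rw [hq_pow, hf]
      _ = (1 - p) ^ (k + 2) * y * p := by
          rw [add_mul, add_mul, mul_assoc f, hry, mul_assoc f, hrp, mul_zero, add_zero]
  calc (1 - p) ^ (k + 1) = (1 - p) ^ (k + 2) + (1 - p) ^ (k + 1) * p := by
        rw [pow_succ _ (k + 1)]; noncomm_ring
    _ = (1 - p) ^ (k + 2) * (1 + y * p) := by rw [hp_pow_mul]; noncomm_ring

lemma exists_isDrazinWithIndex_one_sub_succ_of_sq_eq (hp : p ^ 2 = q * p) (hq : q ^ 2 = p * q)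
    {k : ℕ} (h : ∃ y, IsDrazinWithIndex (1 - q) y k) :
    ∃ z, IsDrazinWithIndex (1 - p) z (k + 1) := by
  obtain ⟨⟨u, hu⟩, v, hv⟩ := exists_isDrazinWithIndex_iff.mp h
  obtain ⟨w, hw⟩ := exists_one_sub_pow_eq_mul_one_sub_pow_succ_of_sq_eq hp hv
  refine exists_isDrazinWithIndex_iff.mpr
    ⟨⟨_, one_sub_pow_succ_eq_one_sub_pow_succ_succ_mul_of_sq_eq hp hq hu⟩, w, ?_⟩
  rw [pow_succ, hw, mul_assoc, ← pow_succ]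

end

end

theorem drazin_iff_index_general {R : Type*} [Ring R] (a b c d : R)
    (h1 : (a * c) ^ 2 = (d * b) * (a * c)) (h2 : (d * b) ^ 2 = (a * c) * (d * b)) :
    ((∃ x : R, ∃ k : ℕ, IsDrazinWithIndex (1 - b * d) x k) ↔
      (∃ y : R, ∃ k : ℕ, IsDrazinWithIndex (1 - a * c) y k)) ∧
    ((∃ x : R, ∃ k : ℕ, IsDrazinWithIndex (1 - b * d) x k) →
      drazinIndex (1 - a * c) ≤ drazinIndex (1 - b * d) + 1) := by
  have forward {k : ℕ} (h : ∃ x, IsDrazinWithIndex (1 - b * d) x k) :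
      ∃ y, IsDrazinWithIndex (1 - a * c) y (k + 1) :=
    exists_isDrazinWithIndex_one_sub_succ_of_sq_eq h1 h2
      (exists_isDrazinWithIndex_one_sub_mul_comm h)
  have backward {k : ℕ} (h : ∃ y, IsDrazinWithIndex (1 - a * c) y k) :
      ∃ x, IsDrazinWithIndex (1 - b * d) x (k + 1) :=
    exists_isDrazinWithIndex_one_sub_mul_comm
      (exists_isDrazinWithIndex_one_sub_succ_of_sq_eq h2 h1 h)
  refine ⟨⟨fun ⟨x, k, hx⟩ => ?_, fun ⟨y, k, hy⟩ => ?_⟩, fun ⟨x, k, hx⟩ => ?_⟩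
  · obtain ⟨y, hy⟩ := forward ⟨x, hx⟩
    exact ⟨y, k + 1, hy⟩
  · obtain ⟨x, hx⟩ := backward ⟨y, hy⟩
    exact ⟨x, k + 1, hx⟩
  · have hne : {m | ∃ x, IsDrazinWithIndex (1 - b * d) x m}.Nonempty := ⟨k, x, hx⟩
    exact Nat.sInf_le (forward (Nat.sInf_mem hne))

theorem drazin_iff_index {R : Type*} [Ring R] (a b c d : R)
    (h1 : (a * c) ^ 2 = (d * b) * (a * c)) (h2 : (d * b) ^ 2 = (a * c) * (d * b))
    (h3 : b * (a * c) * a = b * (d * b) * a) (h4 : c * (a * c) * d = c * (d * b) * d) :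
    ((∃ x : R, ∃ k : ℕ, IsDrazinWithIndex (1 - b * d) x k) ↔
      (∃ y : R, ∃ k : ℕ, IsDrazinWithIndex (1 - a * c) y k)) ∧
    ((∃ x : R, ∃ k : ℕ, IsDrazinWithIndex (1 - b * d) x k) →
      drazinIndex (1 - a * c) ≤ drazinIndex (1 - b * d) + 1) :=
  drazin_iff_index_general a b c d h1 h2
end
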